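/- The set of continuous paths a : [0,1] → [0,1] generated under the c-space operations (constants at endpoints, concatenation, surjective increasing reparametrisation) by the increasing maps [0,1] → [0,1] and the reversion r(t) = 1 − t equals the set of paths of the growing-siphon interval; in particular, every controlled path of c_S𝕀 is piecewise monotone, and on any subinterval where it is decreasing it decreases from 1 to 0. -/

import Mathlib

open unitInterval Set

noncomputable def conc {X : Type*} (a b : I → X) : I → X := fun t =>
  if h : (t : ℝ) ≤ 1 / 2 then
    a ⟨2 * (t : ℝ), by constructor <;> nlinarith [t.2.1, t.2.2]⟩
  else
    b ⟨2 * (t : ℝ) - 1, by have h' := not_le.mp h; constructor <;> nlinarith [t.2.1, t.2.2]⟩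

structure IsCStructure {X : Type*} [TopologicalSpace X] (S : Set (I → X)) : Prop where
  cont : ∀ a ∈ S, Continuous a
  const_src : ∀ a ∈ S, (fun _ : I => a 0) ∈ S
  const_tgt : ∀ a ∈ S, (fun _ : I => a 1) ∈ S
  concat : ∀ a ∈ S, ∀ b ∈ S, a 1 = b 0 → conc a b ∈ S
  reparam : ∀ a ∈ S, ∀ ρ : I → I, Continuous ρ → Monotone ρ → Function.Surjective ρ → a ∘ ρ ∈ S

structure IsDStructure {X : Type*} [TopologicalSpace X] (S : Set (I → X)) : Prop where
  cont : ∀ a ∈ S, Continuous a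
  const : ∀ x : X, (fun _ : I => x) ∈ S
  concat : ∀ a ∈ S, ∀ b ∈ S, a 1 = b 0 → conc a b ∈ S
  reparam : ∀ a ∈ S, ∀ ρ : I → I, Continuous ρ → Monotone ρ → a ∘ ρ ∈ S

def IsFlexible {X : Type*} [TopologicalSpace X] (S : Set (I → X)) (a : I → X) : Prop :=
  a ∈ S ∧ ∀ (t₁ t₂ : ℝ) (h0 : 0 ≤ t₁) (h12 : t₁ < t₂) (h1 : t₂ ≤ 1),
    (fun t : I => a ⟨(t₂ - t₁) * (t : ℝ) + t₁, by
      constructor <;>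
        nlinarith [t.2.1, t.2.2, mul_nonneg (sub_nonneg.mpr h12.le) t.2.1,
          mul_le_of_le_one_right (sub_nonneg.mpr h12.le) t.2.2]⟩) ∈ S

/-- The growing-siphon interval `c_S𝕀`: the c-structure generated by all increasing
continuous maps together with the reversion `r(t) = 1 - t`. -/
def cSgen : Set (I → I) :=
  ⋂₀ {S : Set (I → I) | IsCStructure S ∧
    {a : I → I | Continuous a ∧ Monotone a} ⊆ S ∧ (unitInterval.symm : I → I) ∈ S}

/-!
The piecewise siphon paths form a c-structure containing the generators: the two partitions of a
concatenation are halved and juxtaposed, and an increasing surjective reparametrisation `ρ` pulls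
a partition back along a right inverse of `ρ` fixing `0` and `1`. Conversely, in any c-structure
containing the generators, an increasing piece is a generator and a decreasing piece `c` from `1`
to `0` is the reversion reparametrised by the increasing surjection `r ∘ c`. The pieces are then
glued one at a time, each gluing being a concatenation followed by a piecewise linear
reparametrisation.
-/

section Concatenation

variable {X : Type*}

theorem conc_apply_of_le_half (a b : I → X) {t : I} (ht : (t : ℝ) ≤ 1 / 2) :
    conc a b t = IccExtend zero_le_one a (2 * t) := by
  rw [conc, dif_pos ht]
  exact (IccExtend_of_mem _ _ _).symm

theorem conc_apply_of_half_le {a b : I → X} (hab : a 1 = b 0) {t : I} (ht : 1 / 2 ≤ (t : ℝ)) :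
    conc a b t = IccExtend zero_le_one b (2 * t - 1) := by
  rcases ht.eq_or_lt with h | h
  · rw [conc_apply_of_le_half a b h.ge, ← h]
    simpa using hab
  · rw [conc, dif_neg h.not_ge]
    exact (IccExtend_of_mem _ _ _).symm

theorem continuous_conc [TopologicalSpace X] {a b : I → X} (ha : Continuous a)
    (hb : Continuous b) (hab : a 1 = b 0) : Continuous (conc a b) := by
  have : conc a b =
      ⇑((⟨⟨a, ha⟩, rfl, hab⟩ : Path (a 0) (b 0)).trans ⟨⟨b, hb⟩, rfl, rfl⟩) := by
    funext t
    rw [Path.trans_apply]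
    rfl
  exact this ▸ Path.continuous _

noncomputable def subpath (a : I → X) (p q : ℝ) : I → X :=
  fun t => IccExtend zero_le_one a ((q - p) * t + p)

theorem Continuous.subpath [TopologicalSpace X] {a : I → X} (ha : Continuous a) (p q : ℝ) :
    Continuous (subpath a p q) :=
  ha.Icc_extend'.comp (by fun_prop)

theorem subpath_zero_one (a : I → X) : subpath a 0 1 = a := by
  funext t
  simp [subpath]

end Concatenation

theorem surjective_of_map_zero_of_map_one {f : I → I} (hf : Continuous f) (h₀ : f 0 = 0)
    (h₁ : f 1 = 1) : Function.Surjective f := fun y =>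
  intermediate_value_univ 0 1 hf (by rw [h₀, h₁]; exact ⟨nonneg', le_one'⟩)

theorem coe_projIcc_of_mem {x : ℝ} (h₀ : 0 ≤ x) (h₁ : x ≤ 1) :
    (projIcc 0 1 zero_le_one x : ℝ) = x := by
  rw [projIcc_of_mem _ ⟨h₀, h₁⟩]

section SplitReparam

variable {p q r : ℝ}

-- the piecewise linear map sending `(q - p) / (r - p)` to `1 / 2`
noncomputable def splitReparam (p q r : ℝ) : I → I := fun s =>
  projIcc 0 1 zero_le_one
    (min ((r - p) * s / (2 * (q - p))) (1 / 2) + max (((r - p) * s - (q - p)) / (2 * (r - q))) 0)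

theorem continuous_splitReparam : Continuous (splitReparam p q r) :=
  continuous_projIcc.comp (by fun_prop)

theorem monotone_splitReparam (hpq : p < q) (hqr : q < r) : Monotone (splitReparam p q r) := by
  intro s t hst
  apply monotone_projIcc
  have hst : (s : ℝ) ≤ t := hst
  gcongr <;> linarith

theorem surjective_splitReparam (hpq : p < q) (hqr : q < r) :
    Function.Surjective (splitReparam p q r) := by
  refine surjective_of_map_zero_of_map_one continuous_splitReparam ?_ ?_ <;>
    apply Subtype.ext <;> simp only [splitReparam, Icc.coe_zero, Icc.coe_one]
  · rw [min_eq_left (by norm_num),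
      max_eq_right (div_nonpos_of_nonpos_of_nonneg (by linarith) (by linarith))]
    simp
  · have hrq : (r - p) * 1 - (q - p) = r - q := by ring
    rw [min_eq_right, max_eq_left, hrq]
    · rw [show (r - q) / (2 * (r - q)) = 1 / 2 by field_simp [(sub_pos.2 hqr).ne']]
      norm_num
    · exact div_nonneg (by linarith) (by linarith)
    · rw [le_div_iff₀ (by linarith)]
      linarith

end SplitReparam

theorem conc_subpath_comp_splitReparam {X : Type*} (a : I → X) {p q r : ℝ} (hpq : p < q)
    (hqr : q < r) :
    conc (subpath a p q) (subpath a q r) ∘ splitReparam p q r = subpath a p r := by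
  have hend : subpath a p q 1 = subpath a q r 0 := by simp [subpath]
  funext s
  have hs : (s : ℝ) ∈ Icc 0 1 := s.2
  simp only [Function.comp_apply, splitReparam]
  rcases le_or_gt ((r - p) * s) (q - p) with h | h
  · have hx₀ : 0 ≤ (r - p) * s / (2 * (q - p)) :=
      div_nonneg (mul_nonneg (by linarith) hs.1) (by linarith)
    have hx₁ : (r - p) * s / (2 * (q - p)) ≤ 1 / 2 := by
      rw [div_le_iff₀ (by linarith)]; linarith
    rw [min_eq_left hx₁,
      max_eq_right (div_nonpos_of_nonpos_of_nonneg (by linarith) (by linarith)),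
      add_zero, conc_apply_of_le_half _ _ (by rwa [coe_projIcc_of_mem hx₀ (by linarith)]),
      coe_projIcc_of_mem hx₀ (by linarith), IccExtend_of_mem _ _ ⟨by linarith, by linarith⟩]
    simp only [subpath]
    congr 1
    field_simp [(sub_pos.2 hpq).ne']
  · have hy₀ : 0 ≤ ((r - p) * s - (q - p)) / (2 * (r - q)) :=
      div_nonneg (by linarith) (by linarith)
    have hy₁ : ((r - p) * s - (q - p)) / (2 * (r - q)) ≤ 1 / 2 := by
      have := mul_le_of_le_one_right (by linarith : 0 ≤ r - p) hs.2
      rw [div_le_iff₀ (by linarith)]; linarith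
    rw [min_eq_right (by rw [le_div_iff₀ (by linarith)]; linarith), max_eq_left hy₀,
      conc_apply_of_half_le hend
        (by rw [coe_projIcc_of_mem (by linarith) (by linarith)]; linarith),
      coe_projIcc_of_mem (by linarith) (by linarith),
      IccExtend_of_mem _ _ ⟨by linarith, by linarith⟩]
    simp only [subpath]
    congr 1
    field_simp [(sub_pos.2 hqr).ne']
    ring

theorem IsCStructure.subpath_mem_trans {X : Type*} [TopologicalSpace X] {S : Set (I → X)}
    (hS : IsCStructure S) {a : I → X} {p q r : ℝ} (hpq : p < q) (hqr : q < r)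
    (h₁ : subpath a p q ∈ S) (h₂ : subpath a q r ∈ S) : subpath a p r ∈ S := by
  rw [← conc_subpath_comp_splitReparam a hpq hqr]
  exact hS.reparam _ (hS.concat _ h₁ _ h₂ (by simp [subpath])) _ continuous_splitReparam
    (monotone_splitReparam hpq hqr) (surjective_splitReparam hpq hqr)

theorem partition_strictMonoOn {n : ℕ} {u : ℕ → ℝ} (hu : ∀ i < n, u i < u (i + 1)) :
    StrictMonoOn u (Iic n) :=
  strictMonoOn_Iic_of_lt_succ fun i hi => by simpa using hu i hi

theorem partition_mem_Icc {n : ℕ} {u : ℕ → ℝ} (h₀ : u 0 = 0) (h₁ : u n = 1)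
    (hu : ∀ i < n, u i < u (i + 1)) {i : ℕ} (hi : i ≤ n) : u i ∈ Icc (0 : ℝ) 1 := by
  have hmono := (partition_strictMonoOn hu).monotoneOn
  exact ⟨h₀ ▸ hmono (by simp) hi (Nat.zero_le i), h₁ ▸ hmono hi (by simp) hi⟩

def IsSiphonPiece (a : I → I) (p q : ℝ) : Prop :=
  MonotoneOn a {t : I | p ≤ (t : ℝ) ∧ (t : ℝ) ≤ q} ∨
    (AntitoneOn a {t : I | p ≤ (t : ℝ) ∧ (t : ℝ) ≤ q} ∧
      (∀ t : I, (t : ℝ) = p → a t = 1) ∧ (∀ t : I, (t : ℝ) = q → a t = 0))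

def siphonPaths : Set (I → I) :=
  {a | Continuous a ∧ ∃ n : ℕ, 0 < n ∧ ∃ u : ℕ → ℝ, u 0 = 0 ∧ u n = 1 ∧
    (∀ i < n, u i < u (i + 1)) ∧ ∀ i < n, IsSiphonPiece a (u i) (u (i + 1))}

namespace IsSiphonPiece

variable {a b : I → I} {p q : ℝ}

theorem comp (h : IsSiphonPiece a p q) {φ : I → I} (hφ : Monotone φ) {p' q' : ℝ}
    (hmaps : MapsTo φ {t : I | p' ≤ (t : ℝ) ∧ (t : ℝ) ≤ q'}
      {t : I | p ≤ (t : ℝ) ∧ (t : ℝ) ≤ q})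
    (hp : ∀ t : I, (t : ℝ) = p' → (φ t : ℝ) = p)
    (hq : ∀ t : I, (t : ℝ) = q' → (φ t : ℝ) = q) :
    IsSiphonPiece (a ∘ φ) p' q' := by
  rcases h with hm | ⟨ha, h₁, h₀⟩
  · exact Or.inl (hm.comp (hφ.monotoneOn _) hmaps)
  · exact Or.inr ⟨ha.comp_MonotoneOn (hφ.monotoneOn _) hmaps, fun t ht => h₁ _ (hp t ht),
      fun t ht => h₀ _ (hq t ht)⟩

theorem congr (h : IsSiphonPiece a p q) (hpq : p ≤ q)
    (hab : EqOn a b {t : I | p ≤ (t : ℝ) ∧ (t : ℝ) ≤ q}) : IsSiphonPiece b p q := by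
  rcases h with hm | ⟨ha, h₁, h₀⟩
  · exact Or.inl (hm.congr hab)
  · refine Or.inr ⟨ha.congr hab, fun t ht => ?_, fun t ht => ?_⟩
    · rw [← hab ⟨ht.ge, ht ▸ hpq⟩, h₁ t ht]
    · rw [← hab ⟨ht ▸ hpq, ht.le⟩, h₀ t ht]

theorem of_eqOn_double {c : I → I} {p' q' k : ℝ} (h : IsSiphonPiece a p q) (hp : 0 ≤ p)
    (hpq : p ≤ q) (hq : q ≤ 1) (hp' : 2 * p' - k = p) (hq' : 2 * q' - k = q)
    (hc : ∀ t : I, p' ≤ (t : ℝ) → (t : ℝ) ≤ q' →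
      c t = a (projIcc 0 1 zero_le_one (2 * t - k))) :
    IsSiphonPiece c p' q' := by
  have hφ : ∀ t : I, p' ≤ (t : ℝ) → (t : ℝ) ≤ q' →
      (projIcc 0 1 zero_le_one (2 * t - k) : ℝ) = 2 * t - k :=
    fun t h₁ h₂ => coe_projIcc_of_mem (by linarith) (by linarith)
  refine (h.comp (φ := fun t : I => projIcc 0 1 zero_le_one (2 * (t : ℝ) - k))
    (fun s t hst => monotone_projIcc _ (by linarith [show (s : ℝ) ≤ t from hst]))
    (fun t ht => by constructor <;> dsimp only <;> linarith [hφ t ht.1 ht.2, ht.1, ht.2])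
    (fun t ht => by rw [hφ t ht.ge (by linarith), ht, hp'])
    (fun t ht => by rw [hφ t (by linarith) ht.le, ht, hq'])).congr (by linarith)
    (fun t ht => (hc t ht.1 ht.2).symm)

theorem subpath (h : IsSiphonPiece a p q) (hp : 0 ≤ p) (hpq : p ≤ q) (hq : q ≤ 1) :
    IsSiphonPiece (subpath a p q) 0 1 := by
  have hφ : ∀ t : I, (projIcc 0 1 zero_le_one ((q - p) * t + p) : ℝ) = (q - p) * t + p :=
    fun t => coe_projIcc_of_mem (by nlinarith [t.2.1]) (by nlinarith [t.2.2])
  refine h.comp (φ := fun t : I => projIcc 0 1 zero_le_one ((q - p) * t + p))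
    (fun s t hst => monotone_projIcc _ (by nlinarith [show (s : ℝ) ≤ t from hst]))
    (fun t _ => by constructor <;> nlinarith [hφ t, t.2.1, t.2.2])
    (fun t ht => by rw [hφ t, ht]; ring) (fun t ht => by rw [hφ t, ht]; ring)

theorem monotone_or_antitone (h : IsSiphonPiece a 0 1) :
    Monotone a ∨ (Antitone a ∧ a 0 = 1 ∧ a 1 = 0) := by
  have huniv : {t : I | 0 ≤ (t : ℝ) ∧ (t : ℝ) ≤ 1} = univ :=
    eq_univ_of_forall fun t => t.2
  rw [IsSiphonPiece, huniv, monotoneOn_univ, antitoneOn_univ] at h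
  exact h.imp_right fun ⟨ha, h₁, h₀⟩ => ⟨ha, h₁ 0 rfl, h₀ 1 rfl⟩

end IsSiphonPiece

theorem mem_siphonPaths_of_monotone {a : I → I} (hc : Continuous a) (hm : Monotone a) :
    a ∈ siphonPaths :=
  ⟨hc, 1, one_pos, fun i => i, by simp, by simp, fun i _ => by simp,
    fun _ _ => Or.inl (hm.monotoneOn _)⟩

theorem symm_mem_siphonPaths : (symm : I → I) ∈ siphonPaths := by
  refine ⟨continuous_symm, 1, one_pos, fun i => i, by simp, by simp, fun i _ => by simp,
    fun i hi =>
      Or.inr ⟨fun s _ t _ hst => symm_le_symm.2 hst, fun t ht => ?_, fun t ht => ?_⟩⟩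
  · obtain rfl : i = 0 := Nat.lt_one_iff.1 hi
    rw [show t = 0 from Subtype.ext (by simpa using ht), symm_zero]
  · obtain rfl : i = 0 := Nat.lt_one_iff.1 hi
    rw [show t = 1 from Subtype.ext (by simpa using ht), symm_one]

theorem conc_mem_siphonPaths {a b : I → I} (ha : a ∈ siphonPaths) (hb : b ∈ siphonPaths)
    (hab : a 1 = b 0) : conc a b ∈ siphonPaths := by
  obtain ⟨hac, n, hn, u, hu₀, hu₁, hu, hpa⟩ := ha
  obtain ⟨hbc, m, hm, v, hv₀, hv₁, hv, hpb⟩ := hb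
  set w : ℕ → ℝ := fun i => if i ≤ n then u i / 2 else (v (i - n) + 1) / 2
  have hw_left : ∀ i ≤ n, w i = u i / 2 := fun i hi => if_pos hi
  have hw_right : ∀ j, w (n + j) = (v j + 1) / 2 := by
    intro j
    rcases j.eq_zero_or_pos with rfl | hj
    · simp [w, hu₁, hv₀]
    · simp [w, hj.ne']
  have hpieces :
      ∀ i < n + m, w i < w (i + 1) ∧ IsSiphonPiece (conc a b) (w i) (w (i + 1)) := by
    intro i hi
    rcases lt_or_ge i n with h | h
    · have hui := partition_mem_Icc hu₀ hu₁ hu h.le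
      have hui' : u (i + 1) ≤ 1 := (partition_mem_Icc hu₀ hu₁ hu h).2
      rw [hw_left i h.le, hw_left (i + 1) h]
      refine ⟨by linarith [hu i h], (hpa i h).of_eqOn_double (k := 0) hui.1 (hu i h).le hui'
        (by ring) (by ring) fun t _ ht => ?_⟩
      rw [sub_zero]
      exact conc_apply_of_le_half a b (by linarith)
    · obtain ⟨j, rfl⟩ := Nat.exists_eq_add_of_le h
      have hj : j < m := by omega
      have hvj := partition_mem_Icc hv₀ hv₁ hv hj.le
      have hvj' : v (j + 1) ≤ 1 := (partition_mem_Icc hv₀ hv₁ hv hj).2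
      rw [add_assoc, hw_right, hw_right]
      refine ⟨by linarith [hv j hj], (hpb j hj).of_eqOn_double (k := 1) hvj.1 (hv j hj).le hvj'
        (by ring) (by ring) fun t ht _ => conc_apply_of_half_le hab (by linarith [hvj.1])⟩
  exact ⟨continuous_conc hac hbc hab, n + m, by omega, w,
    by rw [hw_left 0 n.zero_le, hu₀, zero_div], by rw [hw_right, hv₁]; norm_num,
    fun i hi => (hpieces i hi).1, fun i hi => (hpieces i hi).2⟩

theorem exists_rightInverse_fixing_zero_one {ρ : I → I} (hm : Monotone ρ)
    (hs : Function.Surjective ρ) :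
    ∃ g : I → I, Function.RightInverse g ρ ∧ g 0 = 0 ∧ g 1 = 1 := by
  have hρ₀ : ρ 0 = 0 := by
    obtain ⟨x, hx⟩ := hs 0
    exact le_antisymm ((hm nonneg').trans_eq hx) nonneg'
  have hρ₁ : ρ 1 = 1 := by
    obtain ⟨x, hx⟩ := hs 1
    exact le_antisymm le_one' (hx.symm.trans_le (hm le_one'))
  classical
  refine ⟨fun y => if y = 0 then 0 else if y = 1 then 1 else Function.surjInv hs y,
    fun y => ?_, by simp, by simp⟩
  dsimp only
  split_ifs with h₀ h₁
  · rw [h₀, hρ₀]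
  · rw [h₁, hρ₁]
  · exact Function.surjInv_eq hs y

theorem comp_mem_siphonPaths {a : I → I} (ha : a ∈ siphonPaths) {ρ : I → I}
    (hρc : Continuous ρ) (hρm : Monotone ρ) (hρs : Function.Surjective ρ) :
    a ∘ ρ ∈ siphonPaths := by
  obtain ⟨hac, n, hn, u, hu₀, hu₁, hu, hpa⟩ := ha
  obtain ⟨g, hg, hg₀, hg₁⟩ := exists_rightInverse_fixing_zero_one hρm hρs
  set x : ℕ → I := fun i => g (projIcc 0 1 zero_le_one (u i))
  have hρx : ∀ i ≤ n, (ρ (x i) : ℝ) = u i := fun i hi => by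
    have hui := partition_mem_Icc hu₀ hu₁ hu hi
    simp only [x, hg _]
    exact coe_projIcc_of_mem hui.1 hui.2
  have hx : ∀ i < n, (x i : ℝ) < x (i + 1) := fun i hi =>
    lt_of_not_ge fun h =>
      (hu i hi).not_ge (by rw [← hρx i hi.le, ← hρx (i + 1) hi]; exact hρm h)
  refine ⟨hac.comp hρc, n, hn, fun i => x i, by simp [x, hu₀, hg₀],
    by simp [x, hu₁, hg₁], hx,
    fun i hi => (hpa i hi).comp hρm (fun t ht => ?_) (fun t ht => ?_) (fun t ht => ?_)⟩
  · rw [← hρx i hi.le, ← hρx (i + 1) hi]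
    exact ⟨hρm ht.1, hρm ht.2⟩
  · rw [← hρx i hi.le, show t = x i from Subtype.ext ht]
  · rw [← hρx (i + 1) hi, show t = x (i + 1) from Subtype.ext ht]

theorem isCStructure_siphonPaths : IsCStructure siphonPaths where
  cont _ ha := ha.1
  const_src _ _ := mem_siphonPaths_of_monotone continuous_const monotone_const
  const_tgt _ _ := mem_siphonPaths_of_monotone continuous_const monotone_const
  concat _ ha _ hb hab := conc_mem_siphonPaths ha hb hab
  reparam _ ha _ hc hm hs := comp_mem_siphonPaths ha hc hm hs

namespace IsCStructure

variable {S : Set (I → I)}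

theorem mem_of_isSiphonPiece_zero_one (hS : IsCStructure S)
    (hmono : {a : I → I | Continuous a ∧ Monotone a} ⊆ S) (hsymm : (symm : I → I) ∈ S)
    {c : I → I} (hc : Continuous c) (h : IsSiphonPiece c 0 1) : c ∈ S := by
  rcases h.monotone_or_antitone with hm | ⟨ha, h₀, h₁⟩
  · exact hmono ⟨hc, hm⟩
  · have hsc : Continuous (symm ∘ c) := continuous_symm.comp hc
    have hinv : symm ∘ (symm ∘ c) = c := by
      funext t
      simp
    rw [← hinv]
    exact hS.reparam _ hsymm _ hsc (fun s t hst => symm_le_symm.2 (ha hst))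
      (surjective_of_map_zero_of_map_one hsc (by simp [h₀]) (by simp [h₁]))

theorem siphonPaths_subset (hS : IsCStructure S)
    (hmono : {a : I → I | Continuous a ∧ Monotone a} ⊆ S) (hsymm : (symm : I → I) ∈ S) :
    siphonPaths ⊆ S := by
  rintro a ⟨hac, n, hn, u, hu₀, hu₁, hu, hpa⟩
  have hpiece : ∀ i < n, subpath a (u i) (u (i + 1)) ∈ S := fun i hi =>
    hS.mem_of_isSiphonPiece_zero_one hmono hsymm (hac.subpath _ _)
      ((hpa i hi).subpath (partition_mem_Icc hu₀ hu₁ hu hi.le).1 (hu i hi).le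
        (partition_mem_Icc hu₀ hu₁ hu hi).2)
  have hinit : ∀ k, 1 ≤ k → k ≤ n → subpath a (u 0) (u k) ∈ S := by
    intro k hk
    induction k, hk using Nat.le_induction with
    | base => exact fun _ => hpiece 0 hn
    | succ k hk ih =>
      intro hkn
      exact hS.subpath_mem_trans
        (partition_strictMonoOn hu (mem_Iic.2 n.zero_le) (mem_Iic.2 (by omega)) (by omega))
        (hu k (by omega)) (ih (by omega)) (hpiece k (by omega))
  simpa [hu₀, hu₁, subpath_zero_one] using hinit n hn le_rfl

end IsCStructure

/-- The controlled paths of the growing siphon are exactly the piecewise monotone paths whose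
decreasing pieces go (antitonically) from `1` all the way down to `0`. -/
theorem cSgen_characterisation :
    cSgen = {a : I → I | Continuous a ∧ ∃ n : ℕ, 0 < n ∧ ∃ u : ℕ → ℝ,
      u 0 = 0 ∧ u n = 1 ∧ (∀ i < n, u i < u (i + 1)) ∧
      ∀ i < n,
        MonotoneOn a {t : I | u i ≤ (t : ℝ) ∧ (t : ℝ) ≤ u (i + 1)} ∨
        (AntitoneOn a {t : I | u i ≤ (t : ℝ) ∧ (t : ℝ) ≤ u (i + 1)} ∧
          (∀ t : I, (t : ℝ) = u i → a t = 1) ∧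
          (∀ t : I, (t : ℝ) = u (i + 1) → a t = 0))} := by
  change cSgen = siphonPaths
  refine Subset.antisymm (sInter_subset_of_mem ⟨isCStructure_siphonPaths,
    fun a ha => mem_siphonPaths_of_monotone ha.1 ha.2, symm_mem_siphonPaths⟩) ?_
  exact fun a ha =>
    mem_sInter.2 fun S ⟨hS, hmono, hsymm⟩ => hS.siphonPaths_subset hmono hsymm ha
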